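/- Correctness of the bit-vector weight-rule encoding: let l1,...,l_{n+m} be literals (positive atoms b1,...,bn followed by negative literals not c1,...,not cm) with positive integer weights w1,...,w_{n+m}, and let k be a width with w1 + ⋯ + w_{n+m} < 2^k. Suppose (I,τ) is a bit-vector interpretation assigning k-bit values to constants s1,...,s_{n+m} and satisfying all the chain formulas: b1 → (s1 =_k w1), ¬b1 → (s1 =_k 0), and for each subsequent positive literal bi: bi → (s_i =_k s_{i−1} +_k w_i), ¬bi → (s_i =_k s_{i−1}), and for each negative literal not c_j (at position i = n + j): c_j → (s_i =_k s_{i−1}), ¬c_j → (s_i =_k s_{i−1} +_k w_i). Then τ(s_{n+m}) equals the exact (non-modular) sum of the weights of the literals satisfied by I, and for every bound l with l < 2^k, (I,τ) ⊨ ¬(s_{n+m} <_k l) if and only if the sum of weights of satisfied literals is at least l. -/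
import Mathlib


open Classical in
/-- Correctness of the bit-vector weight-rule encoding.
Let `l₁,...,l_{n+m}` be literals — positive atoms `b 1, ..., b n` followed by
negative literals `not (c 1), ..., not (c m)` — with positive weights
`w 1, ..., w (n+m)` whose total sum is below `2^k`.  Literal `i` is satisfied
by `I` iff `b i ∈ I` (for `i ≤ n`), resp. `c (i-n) ∉ I` (for `i > n`).
Suppose the `k`-bit values `s 1, ..., s (n+m)` satisfy all the chain formulas
(with modular addition `+_k`, and where the "previous" value of `s 1` is `0`,
matching `b₁ → (s₁ =_k w₁)` and `¬b₁ → (s₁ =_k 0)`):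
`lᵢ` satisfied → `sᵢ =_k s_{i-1} +_k wᵢ`, and `lᵢ` unsatisfied → `sᵢ =_k s_{i-1}`.
Then `s (n+m)` is the exact (non-modular) sum of the weights of the satisfied
literals, and for every bound `l < 2^k`, `¬(s_{n+m} <_k l)` holds iff the sum
of the weights of the satisfied literals is at least `l`. -/
theorem weight_rule_encoding_correct {α : Type} (I : Set α)
    (n m k : ℕ) (hnm : 0 < n + m)
    (b c : ℕ → α) (w : ℕ → ℕ) (s : ℕ → ℕ)
    (hw : ∀ i ∈ Finset.Icc 1 (n + m), 0 < w i)
    (hsum : ∑ i ∈ Finset.Icc 1 (n + m), w i < 2 ^ k)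
    (hsbound : ∀ i ∈ Finset.Icc 1 (n + m), s i < 2 ^ k)
    (hchain : ∀ i ∈ Finset.Icc 1 (n + m),
      ((if i ≤ n then b i ∈ I else c (i - n) ∉ I) →
        s i = ((if i = 1 then 0 else s (i - 1)) + w i) % 2 ^ k) ∧
      (¬ (if i ≤ n then b i ∈ I else c (i - n) ∉ I) →
        s i = (if i = 1 then 0 else s (i - 1)))) :
    s (n + m) =
      (∑ i ∈ Finset.Icc 1 (n + m),
        if (if i ≤ n then b i ∈ I else c (i - n) ∉ I) then w i else 0) ∧
    ∀ l : ℕ, l < 2 ^ k →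
      (¬ (s (n + m) < l) ↔
        l ≤ ∑ i ∈ Finset.Icc 1 (n + m),
              if (if i ≤ n then b i ∈ I else c (i - n) ∉ I) then w i else 0) := by
  classical
  set f : ℕ → ℕ := fun i => if (if i ≤ n then b i ∈ I else c (i - n) ∉ I) then w i else 0
    with hf
  have hfle : ∀ i, f i ≤ w i := by
    intro i
    show (if (if i ≤ n then b i ∈ I else c (i - n) ∉ I) then w i else 0) ≤ w i
    by_cases h : (if i ≤ n then b i ∈ I else c (i - n) ∉ I)
    · rw [if_pos h]
    · rw [if_neg h]; omega
  have hpartial : ∀ j, j ≤ n + m → ∑ i ∈ Finset.Icc 1 j, f i < 2 ^ k := by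
    intro j hj
    calc ∑ i ∈ Finset.Icc 1 j, f i ≤ ∑ i ∈ Finset.Icc 1 (n+m), f i := by
          apply Finset.sum_le_sum_of_subset
          intro x hx
          simp only [Finset.mem_Icc] at *
          omega
      _ ≤ ∑ i ∈ Finset.Icc 1 (n+m), w i := Finset.sum_le_sum (fun i _ => hfle i)
      _ < 2 ^ k := hsum
  have key : ∀ j, 1 ≤ j → j ≤ n + m → s j = ∑ i ∈ Finset.Icc 1 j, f i := by
    intro j h1 h2
    induction j with
    | zero => omega
    | succ j ih =>
      rcases Nat.eq_or_lt_of_le h1 with h | h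
      · -- j+1 = 1
        have hj : j = 0 := by omega
        subst hj
        obtain ⟨hpos, hneg⟩ := hchain 1 (by simp [Finset.mem_Icc]; omega)
        have h11 : (if (1:ℕ) = 1 then (0:ℕ) else s (1-1)) = 0 := if_pos rfl
        rw [h11] at hpos hneg
        rw [zero_add] at hpos
        have hs1 : ∑ i ∈ Finset.Icc 1 1, f i = f 1 := by simp
        rw [hs1]
        by_cases hP : (if 1 ≤ n then b 1 ∈ I else c (1 - n) ∉ I)
        · rw [hpos hP]
          have hfeq : f 1 = w 1 := by
            show (if (if 1 ≤ n then b 1 ∈ I else c (1 - n) ∉ I) then w 1 else 0) = w 1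
            rw [if_pos hP]
          rw [hfeq]
          apply Nat.mod_eq_of_lt
          calc w 1 ≤ ∑ i ∈ Finset.Icc 1 (n+m), w i := by
                apply Finset.single_le_sum (f := w) (fun i _ => Nat.zero_le _)
                simp [Finset.mem_Icc]; omega
            _ < 2 ^ k := hsum
        · rw [hneg hP]
          show 0 = (if (if 1 ≤ n then b 1 ∈ I else c (1 - n) ∉ I) then w 1 else 0)
          rw [if_neg hP]
      · -- j ≥ 1
        have hj1 : 1 ≤ j := by omega
        have hjle : j ≤ n + m := by omega
        have ihj := ih hj1 hjle
        obtain ⟨hpos, hneg⟩ := hchain (j+1) (by simp [Finset.mem_Icc]; omega)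
        have hne : (if j + 1 = 1 then (0:ℕ) else s (j + 1 - 1)) = s j := by
          rw [if_neg (by omega : ¬ (j + 1 = 1)), Nat.add_sub_cancel]
        rw [hne] at hpos hneg
        rw [Finset.sum_Icc_succ_top (by omega : 1 ≤ j + 1)]
        by_cases hP : (if j + 1 ≤ n then b (j+1) ∈ I else c (j + 1 - n) ∉ I)
        · have hfeq : f (j+1) = w (j+1) := by
            show (if (if j+1 ≤ n then b (j+1) ∈ I else c (j+1 - n) ∉ I) then w (j+1) else 0)
              = w (j+1)
            rw [if_pos hP]
          rw [hpos hP, ihj, hfeq]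
          apply Nat.mod_eq_of_lt
          have hlt := hpartial (j+1) (by omega)
          rw [Finset.sum_Icc_succ_top (by omega : 1 ≤ j + 1), hfeq] at hlt
          exact hlt
        · have hfeq : f (j+1) = 0 := by
            show (if (if j+1 ≤ n then b (j+1) ∈ I else c (j+1 - n) ∉ I) then w (j+1) else 0) = 0
            rw [if_neg hP]
          rw [hneg hP, ihj, hfeq, Nat.add_zero]
  have hmain : s (n + m) = ∑ i ∈ Finset.Icc 1 (n + m), f i := key (n+m) hnm le_rfl
  have hsum_eq : (∑ i ∈ Finset.Icc 1 (n + m),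
      if (if i ≤ n then b i ∈ I else c (i - n) ∉ I) then w i else 0)
      = ∑ i ∈ Finset.Icc 1 (n + m), f i := rfl
  rw [hsum_eq]
  exact ⟨hmain, fun l hl => by rw [hmain]; omega⟩
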